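/- arXiv:1401.1444 — 3 statements merged into one kernel-verified Lean document; each statement's English description precedes it below -/
import Mathlib

section
/- Let r and s be positive integers satisfying one of the following: (a) r \equiv 2 (mod 3) and s \equiv 2 (mod 6); (b) r \equiv 0 (mod 3) and s \equiv 0 (mod 3); (c) r \equiv 1 (mod 3), r \ge 4, and s \equiv 4 (mod 6). Then for every nonnegative integer n with 3-adic expansion n = n_0 + 3 n_1 + 3^2 n_2 + \cdots + 3^m n_m (0 \le n_i \le 2), one has a_n(r,s) \equiv \prod_{i=0}^{m} a_{n_i}(r,s) (mod 9). -/
/-!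
Write `n = 3a + b` and `k = 3c + e` with `b, e < 3`. By Lucas' theorem `C(n,k)` is divisible
by 3 when `e > b`, and so is `C(n+k,k)` when the last ternary digit of `n + k` is smaller than
`e`; as `r, s ≥ 2`, such terms vanish mod 9. Among the survivors, `C(3A,3C) ≡ C(A,C) (mod 9)`,
and `C(3A+1,3C)`, `C(3A+1,3C+1)`, `C(3A+2,3C)`, `C(3A+2,3C+1)` differ from it by explicit
factors `1 + 3t` or `2 + 3t`. For `b = 0, 2` one term of each block of three survives and equals
the `c`-th term of `a_a`, while `a_0 = 1` and `a_2 ≡ 1`. For `b = 1` two terms survive, and their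
sum is `(1 + 2^s)` times the `c`-th term of `a_a` because `r ≡ s (mod 3)` and `s` is
even or divisible by 3. Hence `a_{3a+b} ≡ a_a a_b (mod 9)`, and induction on the digits concludes.
-/

open Finset

/-- The generalised Apéry numbers `a_n(r,s) = ∑_{k=0}^n C(n,k)^r C(n+k,k)^s`. -/
def apery (r s n : ℕ) : ℕ :=
  ∑ k ∈ Finset.range (n + 1), n.choose k ^ r * (n + k).choose k ^ s

lemma sum_range_mul_eq_sum_sum {M : Type*} [AddCommMonoid M] (f : ℕ → M) (p N : ℕ) :
    ∑ k ∈ range (p * N), f k = ∑ c ∈ range N, ∑ e ∈ range p, f (p * c + e) := by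
  induction N with
  | zero => simp
  | succ N ih => rw [mul_add, mul_one, sum_range_add, ih, sum_range_succ]

lemma map_sum_digits_eq_prod {M : Type*} [CommMonoid M] {p : ℕ} (f : ℕ → M)
    (hf : ∀ a b, b < p → f (p * a + b) = f a * f b) (m : ℕ) (d : ℕ → ℕ) (hd : ∀ i, d i < p) :
    f (∑ i ∈ range (m + 1), d i * p ^ i) = ∏ i ∈ range (m + 1), f (d i) := by
  induction m generalizing d with
  | zero => simp
  | succ m ih =>
    have hsplit : ∑ i ∈ range (m + 1 + 1), d i * p ^ i =
        p * ∑ i ∈ range (m + 1), d (i + 1) * p ^ i + d 0 := by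
      rw [sum_range_succ', pow_zero, mul_one, mul_sum]
      congr 1
      exact sum_congr rfl fun i _ => by ring
    rw [hsplit, hf _ _ (hd 0), ih _ fun i => hd (i + 1), prod_range_succ' (fun i => f (d i))]

theorem Nat.choose_add_three (n k : ℕ) :
    (n + 3).choose (k + 3) =
      n.choose k + 3 * n.choose (k + 1) + 3 * n.choose (k + 2) + n.choose (k + 3) := by
  simp only [Nat.choose_succ_succ', Nat.add_assoc]
  ring

theorem Nat.Prime.dvd_choose_of_mod_lt {p n k : ℕ} (hp : p.Prime) (h : n % p < k % p) :
    p ∣ n.choose k := by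
  have := Fact.mk hp
  rw [Nat.dvd_iff_mod_eq_zero, Choose.choose_modEq_choose_mod_mul_choose_div_nat,
    Nat.choose_eq_zero_of_lt h, zero_mul, Nat.zero_mod]

lemma three_mul_natCast_eq_zero {m : ℕ} (hm : 3 ∣ m) : 3 * (m : ZMod 9) = 0 := by
  obtain ⟨j, rfl⟩ := hm
  push_cast
  rw [← mul_assoc, show (3 * 3 : ZMod 9) = 0 by decide, zero_mul]

lemma natCast_pow_eq_zero_of_three_dvd {m r : ℕ} (hm : 3 ∣ m) (hr : 2 ≤ r) :
    (m : ZMod 9) ^ r = 0 := by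
  obtain ⟨j, rfl⟩ := hm
  obtain ⟨t, rfl⟩ := Nat.exists_eq_add_of_le hr
  rw [pow_add, Nat.cast_mul, mul_pow, show ((3 : ℕ) : ZMod 9) ^ 2 = 0 by decide, zero_mul,
    zero_mul]

lemma one_add_three_mul_pow (t : ZMod 9) (r : ℕ) : (1 + 3 * t) ^ r = 1 + 3 * r * t := by
  induction r with
  | zero => simp
  | succ r ih =>
    rw [pow_succ, ih]
    push_cast
    ring_nf
    reduce_mod_char

lemma choose_pow_eq_zero {n k r : ℕ} (h : n % 3 < k % 3) (hr : 2 ≤ r) :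
    (n.choose k : ZMod 9) ^ r = 0 :=
  natCast_pow_eq_zero_of_three_dvd (Nat.prime_three.dvd_choose_of_mod_lt h) hr

lemma choose_three_mul_three_mul (a c : ℕ) :
    ((3 * a).choose (3 * c) : ZMod 9) = a.choose c := by
  induction a generalizing c with
  | zero => cases c <;> simp [Nat.choose_eq_zero_of_lt]
  | succ a ih =>
    cases c with
    | zero => simp
    | succ c =>
      -- the middle terms of `Nat.choose_add_three` are 3 times multiples of 3
      have h1 := three_mul_natCast_eq_zero
        (Nat.prime_three.dvd_choose_of_mod_lt (n := 3 * a) (k := 3 * c + 1) (by omega))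
      have h2 := three_mul_natCast_eq_zero
        (Nat.prime_three.dvd_choose_of_mod_lt (n := 3 * a) (k := 3 * c + 2) (by omega))
      rw [show 3 * (a + 1) = 3 * a + 3 by ring, show 3 * (c + 1) = 3 * c + 3 by ring,
        Nat.choose_add_three, Nat.choose_succ_succ']
      push_cast
      rw [ih, ← ih (c + 1), show 3 * (c + 1) = 3 * c + 3 by ring]
      linear_combination h1 + h2

section NeighbouringBinomials

variable (c d : ℕ)

lemma choose_three_mul_add_one_three_mul :
    ((3 * (c + d) + 1).choose (3 * c) : ZMod 9) = (c + d).choose c * (1 + 3 * c) := by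
  have h := Nat.choose_mul_succ_eq (3 * (c + d)) (3 * c)
  rw [show 3 * (c + d) + 1 - 3 * c = 3 * d + 1 by omega] at h
  have h' := congrArg (Nat.cast : ℕ → ZMod 9) h
  push_cast at h'
  rw [choose_three_mul_three_mul] at h'
  linear_combination (norm := (ring_nf; reduce_mod_char)) (3 * d - 1) * h'

lemma choose_three_mul_add_one_three_mul_add_one :
    ((3 * (c + d) + 1).choose (3 * c + 1) : ZMod 9) = (c + d).choose c * (1 + 3 * d) := by
  have h := congrArg (Nat.cast : ℕ → ZMod 9) (Nat.add_one_mul_choose_eq (3 * (c + d)) (3 * c))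
  push_cast at h
  rw [choose_three_mul_three_mul] at h
  linear_combination (norm := (ring_nf; reduce_mod_char)) (3 * c - 1) * h

lemma choose_three_mul_add_two_three_mul :
    ((3 * (c + d) + 2).choose (3 * c) : ZMod 9) = (c + d).choose c := by
  have h := Nat.choose_mul_succ_eq (3 * (c + d) + 1) (3 * c)
  rw [show 3 * (c + d) + 1 + 1 = 3 * (c + d) + 2 from rfl,
    show 3 * (c + d) + 2 - 3 * c = 3 * d + 2 by omega] at h
  have h' := congrArg (Nat.cast : ℕ → ZMod 9) h
  push_cast at h'
  rw [choose_three_mul_add_one_three_mul] at h'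
  -- `5 * (1 + 3 * d)` is the inverse of `3 * d + 2` mod 9
  linear_combination (norm := (ring_nf; reduce_mod_char)) -5 * (1 + 3 * d) * h'

lemma choose_three_mul_add_two_three_mul_add_one :
    ((3 * (c + d) + 2).choose (3 * c + 1) : ZMod 9) = (c + d).choose c * (2 + 3 * (c + d)) := by
  have h :=
    congrArg (Nat.cast : ℕ → ZMod 9) (Nat.add_one_mul_choose_eq (3 * (c + d) + 1) (3 * c))
  push_cast at h
  rw [choose_three_mul_add_one_three_mul] at h
  linear_combination (norm := (ring_nf; reduce_mod_char)) (3 * c - 1) * h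

end NeighbouringBinomials

lemma three_mul_natCast_eq_of_modEq {r s : ℕ} (h : r ≡ s [MOD 3]) :
    3 * (r : ZMod 9) = 3 * s := by
  obtain ⟨k, hk⟩ := h.dvd
  have hk' := congrArg (Int.cast : ℤ → ZMod 9) hk
  push_cast at hk'
  linear_combination (norm := (ring_nf; reduce_mod_char)) -3 * hk'

lemma three_mul_natCast_mul_two_pow {s : ℕ} (hs : Even s ∨ 3 ∣ s) :
    3 * (s : ZMod 9) * 2 ^ s = 3 * s := by
  rcases hs with ⟨j, rfl⟩ | hs
  · rw [← two_mul, pow_mul, show (2 : ZMod 9) ^ 2 = 1 + 3 * 1 by decide, one_add_three_mul_pow]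
    push_cast
    ring_nf
    reduce_mod_char
  · rw [three_mul_natCast_eq_zero hs, zero_mul]

-- This is where the congruence conditions on `r` and `s` enter.
lemma one_add_three_mul_pow_add_eq {r s : ℕ} (hrs : r ≡ s [MOD 3]) (hs : Even s ∨ 3 ∣ s)
    (c d : ZMod 9) :
    (1 + 3 * c) ^ r * (1 + 3 * c) ^ s + (1 + 3 * d) ^ r * (2 + 3 * (c + (c + d))) ^ s =
      1 + 2 ^ s := by
  rw [show 2 + 3 * (c + (c + d)) = 2 * (1 + 3 * (2 * (2 * c + d))) by ring_nf; reduce_mod_char,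
    mul_pow, one_add_three_mul_pow, one_add_three_mul_pow, one_add_three_mul_pow,
    one_add_three_mul_pow]
  linear_combination (norm := (ring_nf; reduce_mod_char))
    (c + 2 ^ s * d) * three_mul_natCast_eq_of_modEq hrs + 4 * c * three_mul_natCast_mul_two_pow hs

def aperyTerm (r s n k : ℕ) : ℕ := n.choose k ^ r * (n + k).choose k ^ s

lemma apery_eq_sum_range {r : ℕ} (hr : r ≠ 0) (s : ℕ) {n N : ℕ} (hN : n < N) :
    apery r s n = ∑ k ∈ range N, aperyTerm r s n k := by
  refine sum_subset (range_subset_range.mpr hN) fun k _ hk => ?_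
  rw [Nat.choose_eq_zero_of_lt (by simpa using hk), zero_pow hr, zero_mul]

lemma apery_one (r s : ℕ) : (apery r s 1 : ZMod 9) = 1 + 2 ^ s := by
  simp [apery, sum_range_succ]

lemma apery_two (r : ℕ) {s : ℕ} (hs : 2 ≤ s) : (apery r s 2 : ZMod 9) = 1 := by
  have h3 : (3 : ZMod 9) ^ s = 0 := by
    exact_mod_cast natCast_pow_eq_zero_of_three_dvd (m := 3) dvd_rfl hs
  have h6 : (6 : ZMod 9) ^ s = 0 := by
    exact_mod_cast natCast_pow_eq_zero_of_three_dvd (m := 6) (by norm_num) hs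
  simp [apery, sum_range_succ, Nat.choose, h3, h6]

section Blocks

variable {r s : ℕ} (c d : ℕ)

lemma sum_aperyTerm_three_mul (hr : 2 ≤ r) :
    ∑ e ∈ range 3, (aperyTerm r s (3 * (c + d)) (3 * c + e) : ZMod 9) =
      aperyTerm r s (c + d) c := by
  simp only [sum_range_succ, sum_range_zero, zero_add, add_zero, aperyTerm, Nat.cast_mul,
    Nat.cast_pow]
  rw [choose_pow_eq_zero (n := 3 * (c + d)) (k := 3 * c + 1) (by omega) hr,
    choose_pow_eq_zero (n := 3 * (c + d)) (k := 3 * c + 2) (by omega) hr,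
    show 3 * (c + d) + 3 * c = 3 * (c + d + c) by ring, choose_three_mul_three_mul,
    choose_three_mul_three_mul]
  ring

lemma sum_aperyTerm_three_mul_add_one (hr : 2 ≤ r) (hrs : r ≡ s [MOD 3])
    (hs : Even s ∨ 3 ∣ s) :
    ∑ e ∈ range 3, (aperyTerm r s (3 * (c + d) + 1) (3 * c + e) : ZMod 9) =
      aperyTerm r s (c + d) c * (1 + 2 ^ s) := by
  simp only [sum_range_succ, sum_range_zero, zero_add, add_zero, aperyTerm, Nat.cast_mul,
    Nat.cast_pow]
  rw [choose_pow_eq_zero (n := 3 * (c + d) + 1) (k := 3 * c + 2) (by omega) hr,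
    show 3 * (c + d) + 1 + 3 * c = 3 * (c + (c + d)) + 1 by ring,
    show 3 * (c + d) + 1 + (3 * c + 1) = 3 * (c + (c + d)) + 2 by ring,
    choose_three_mul_add_one_three_mul, choose_three_mul_add_one_three_mul_add_one,
    choose_three_mul_add_one_three_mul, choose_three_mul_add_two_three_mul_add_one,
    add_comm (c + d) c, ← one_add_three_mul_pow_add_eq hrs hs c d]
  push_cast
  simp only [mul_pow]
  ring

lemma sum_aperyTerm_three_mul_add_two (hs : 2 ≤ s) :
    ∑ e ∈ range 3, (aperyTerm r s (3 * (c + d) + 2) (3 * c + e) : ZMod 9) =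
      aperyTerm r s (c + d) c := by
  simp only [sum_range_succ, sum_range_zero, zero_add, add_zero, aperyTerm, Nat.cast_mul,
    Nat.cast_pow]
  rw [choose_pow_eq_zero (n := 3 * (c + d) + 2 + (3 * c + 1)) (k := 3 * c + 1) (by omega) hs,
    choose_pow_eq_zero (n := 3 * (c + d) + 2 + (3 * c + 2)) (k := 3 * c + 2) (by omega) hs,
    show 3 * (c + d) + 2 + 3 * c = 3 * (c + (c + d)) + 2 by ring,
    choose_three_mul_add_two_three_mul, choose_three_mul_add_two_three_mul, add_comm (c + d) c]
  ring

end Blocks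

lemma apery_three_mul_add {r s : ℕ} (hr : 2 ≤ r) (hs : 2 ≤ s) (hrs : r ≡ s [MOD 3])
    (hs_even_or_dvd : Even s ∨ 3 ∣ s) (a : ℕ) {b : ℕ} (hb : b < 3) :
    (apery r s (3 * a + b) : ZMod 9) = apery r s a * apery r s b := by
  have hblock : ∀ c ∈ range (a + 1),
      ∑ e ∈ range 3, (aperyTerm r s (3 * a + b) (3 * c + e) : ZMod 9) =
        aperyTerm r s a c * apery r s b := by
    intro c hc
    obtain ⟨d, rfl⟩ := Nat.exists_eq_add_of_le (Nat.lt_succ_iff.mp (mem_range.mp hc))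
    interval_cases b
    · simpa [apery] using sum_aperyTerm_three_mul c d hr
    · rw [apery_one]
      exact sum_aperyTerm_three_mul_add_one c d hr hrs hs_even_or_dvd
    · rw [apery_two r hs, mul_one]
      exact sum_aperyTerm_three_mul_add_two c d hs
  rw [apery_eq_sum_range (by omega) s (show 3 * a + b < 3 * (a + 1) by omega), Nat.cast_sum,
    sum_range_mul_eq_sum_sum, sum_congr rfl hblock, ← sum_mul,
    apery_eq_sum_range (by omega) s (Nat.lt_succ_self a), Nat.cast_sum]

/-- Gessel-type mod-9 factorisation of generalised Apéry numbers. -/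
theorem apery_factorisation_mod_nine (r s : ℕ) (hr : 0 < r) (hs : 0 < s)
    (hrs : (r % 3 = 2 ∧ s % 6 = 2) ∨ (r % 3 = 0 ∧ s % 3 = 0) ∨
      (r % 3 = 1 ∧ 4 ≤ r ∧ s % 6 = 4))
    (n m : ℕ) (d : ℕ → ℕ) (hd2 : ∀ i, d i ≤ 2)
    (hn : n = ∑ i ∈ Finset.range (m + 1), d i * 3 ^ i) :
    apery r s n ≡ ∏ i ∈ Finset.range (m + 1), apery r s (d i) [MOD 9] := by
  have hr2 : 2 ≤ r := by omega
  have hs2 : 2 ≤ s := by omega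
  have hrs_mod : r ≡ s [MOD 3] := by unfold Nat.ModEq; omega
  have hs_even_or_dvd : Even s ∨ 3 ∣ s := by
    rcases hrs with h | h | h
    · exact .inl (Nat.even_iff.mpr (by omega))
    · exact .inr (Nat.dvd_of_mod_eq_zero h.2)
    · exact .inl (Nat.even_iff.mpr (by omega))
  rw [← ZMod.natCast_eq_natCast_iff, hn, Nat.cast_prod]
  exact map_sum_digits_eq_prod (fun n => (apery r s n : ZMod 9))
    (fun a _ hb => apery_three_mul_add hr2 hs2 hrs_mod hs_even_or_dvd a hb) m d
    fun i => Nat.lt_succ_of_le (hd2 i)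
end

section
/- Let r and s be positive integers with r \equiv 2 (mod 3) and s \equiv 0 (mod 6). For a nonnegative integer n, let t be the number of digits equal to 1 in the 3-adic expansion of n, let o_1 be the number of occurrences of the string 11 and o_2 the number of occurrences of the string 21. Then: a_n(r,s) \equiv 1 (mod 9) iff t = 2d is even and d + o_1 - o_2 \equiv 0 (mod 3); a_n(r,s) \equiv 4 (mod 9) iff t = 2d is even and d + o_1 - o_2 \equiv 1 (mod 3); a_n(r,s) \equiv 7 (mod 9) iff t = 2d is even and d + o_1 - o_2 \equiv 2 (mod 3); a_n(r,s) \equiv 2 (mod 9) iff t = 2d+1 is odd and d + o_1 - o_2 \equiv 0 (mod 3); a_n(r,s) \equiv 8 (mod 9) iff t = 2d+1 is odd and d + o_1 - o_2 \equiv 1 (mod 3); a_n(r,s) \equiv 5 (mod 9) iff t = 2d+1 is odd and d + o_1 - o_2 \equiv 2 (mod 3); and a_n(r,s) is never \equiv 3 or 6 (mod 9). -/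
open Finset

/-- The number of digits among `d 0, …, d m` equal to `v`. -/
def digitCount (d : ℕ → ℕ) (m v : ℕ) : ℕ :=
  ((Finset.range (m + 1)).filter fun i => d i = v).card

/-- The number of occurrences of the string `ab` in the 3-adic expansion with digits
`d 0, …, d m` (using the convention that digits above position `m` are zero): indices `ν`
with `1 ≤ ν ≤ m + 1`, `d ν = a` and `d (ν - 1) = b`. -/
def occ (d : ℕ → ℕ) (m a b : ℕ) : ℕ :=
  ((Finset.Icc 1 (m + 1)).filter fun ν => d ν = a ∧ d (ν - 1) = b).card

/-- The 3-adic expansion of `n` (digits `d 0, …, d m`) has exactly one occurrence of the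
string `ab`, and all digits not belonging to this occurrence are `0` or `2`. -/
def uniqueOcc (d : ℕ → ℕ) (m a b : ℕ) : Prop :=
  occ d m a b = 1 ∧
  ∀ ν ∈ Finset.Icc 1 (m + 1), (d ν = a ∧ d (ν - 1) = b) →
    ∀ i ≤ m, i ≠ ν → i ≠ ν - 1 → (d i = 0 ∨ d i = 2)

/-!
For `ε, δ ≤ 2`, write `(3A + ε)! = 3^A A! ∏_{i<A} (3i+1)(3i+2) · (3A+1)⋯(3A+ε)`; the product
is `≡ 2^A (mod 9)`, so `C(3A + ε, 3B + δ)` is `C(A, B)` times an explicit unit modulo `9` when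
`δ ≤ ε`, while by Lucas it is divisible by `3` when `δ > ε`. As `r, s ≥ 2` those terms vanish
modulo `9`; the units are `2` and `1 + 3y`, with `2^s = (1 + 3y)^s = 1` and
`(1 + 3y)^r = 1 + 6y` because `6 ∣ s` and `r ≡ 2 (mod 3)`. Summing `a_n(r,s)` in blocks of
three indices gives `a_{3q+j} ≡ a_q` for `j ∈ {0, 2}` and `a_{3q+1} ≡ 2 (1 + 3q) a_q (mod 9)`.
Iterating over the digits, `a_n ≡ 2^t (1 + 3 (o_1 - o_2))`, and `2^{2e} = 4^e ≡ 1 + 3e` turns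
this into the table.
-/

namespace Apery

open Nat

section Factorials

def prodCoprimeThree (A : ℕ) : ℕ := ∏ i ∈ range A, (3 * i + 1) * (3 * i + 2)

theorem factorial_three_mul (A : ℕ) : (3 * A)! = 3 ^ A * A ! * prodCoprimeThree A := by
  induction A with
  | zero => simp [prodCoprimeThree]
  | succ A ih =>
    rw [show 3 * (A + 1) = 3 * A + 1 + 1 + 1 by ring, factorial_succ, factorial_succ,
      factorial_succ, ih, prodCoprimeThree, prodCoprimeThree, prod_range_succ, factorial_succ]
    ring

theorem factorial_three_mul_add (A ε : ℕ) :
    (3 * A + ε)! = 3 ^ A * A ! * prodCoprimeThree A * (3 * A + 1).ascFactorial ε := by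
  rw [← factorial_mul_ascFactorial, factorial_three_mul]

theorem choose_three_mul_add_mul (k l δ γ : ℕ) :
    (3 * (k + l) + (δ + γ)).choose (3 * k + δ) *
        (prodCoprimeThree k * (3 * k + 1).ascFactorial δ) *
        (prodCoprimeThree l * (3 * l + 1).ascFactorial γ) =
      (k + l).choose k * (prodCoprimeThree (k + l) * (3 * (k + l) + 1).ascFactorial (δ + γ)) := by
  have hchoose := add_choose_mul_factorial_mul_factorial (3 * l + γ) (3 * k + δ)
  have hchoose' := add_choose_mul_factorial_mul_factorial l k
  rw [show 3 * l + γ + (3 * k + δ) = 3 * (k + l) + (δ + γ) by ring, factorial_three_mul_add,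
    factorial_three_mul_add, factorial_three_mul_add] at hchoose
  rw [add_comm l k] at hchoose'
  apply Nat.eq_of_mul_eq_mul_right (show 0 < 3 ^ (k + l) * (l ! * k !) by positivity)
  calc _ = (3 * (k + l) + (δ + γ)).choose (3 * k + δ) *
        (3 ^ l * l ! * prodCoprimeThree l * (3 * l + 1).ascFactorial γ) *
        (3 ^ k * k ! * prodCoprimeThree k * (3 * k + 1).ascFactorial δ) := by ring
    _ = 3 ^ (k + l) * ((k + l).choose k * l ! * k !) * prodCoprimeThree (k + l) *
        (3 * (k + l) + 1).ascFactorial (δ + γ) := by rw [hchoose, hchoose']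
    _ = _ := by ring

end Factorials

section BinomialModNine

theorem prodCoprimeThree_cast (A : ℕ) : (prodCoprimeThree A : ZMod 9) = 2 ^ A := by
  induction A with
  | zero => simp [prodCoprimeThree]
  | succ A ih =>
    rw [prodCoprimeThree, prod_range_succ, ← prodCoprimeThree]
    push_cast [ih, pow_succ]
    ring_nf
    reduce_mod_char

theorem choose_three_mul_add_cast (k l δ γ : ℕ) :
    ((3 * (k + l) + (δ + γ)).choose (3 * k + δ) : ZMod 9) *
        ((3 * k + 1).ascFactorial δ : ZMod 9) * ((3 * l + 1).ascFactorial γ : ZMod 9) =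
      (k + l).choose k * ((3 * (k + l) + 1).ascFactorial (δ + γ) : ZMod 9) := by
  have h := congrArg (Nat.cast : ℕ → ZMod 9) (choose_three_mul_add_mul k l δ γ)
  push_cast [prodCoprimeThree_cast] at h
  apply ((by decide : IsUnit (2 : ZMod 9)).pow (k + l)).mul_left_cancel
  linear_combination (norm := ring_nf) h

-- Below, `k + l` and `k` stand for `A` and `B` in `C(3A + ε, 3B + δ)`, so that `A - B = l`
-- needs no truncated subtraction.

theorem choose_three_mul_cast (k l : ℕ) :
    ((3 * (k + l)).choose (3 * k) : ZMod 9) = (k + l).choose k := by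
  simpa using choose_three_mul_add_cast k l 0 0

theorem choose_three_mul_add_two_cast (k l : ℕ) :
    ((3 * (k + l) + 2).choose (3 * k) : ZMod 9) = (k + l).choose k := by
  have h := choose_three_mul_add_cast k l 0 2
  simp only [ascFactorial_succ, ascFactorial_zero] at h
  push_cast at h
  linear_combination (norm := (ring_nf; reduce_mod_char)) 5 * h

theorem choose_three_mul_add_one_cast (k l : ℕ) :
    ((3 * (k + l) + 1).choose (3 * k) : ZMod 9) = (k + l).choose k * (1 + 3 * k) := by
  have h := choose_three_mul_add_cast k l 0 1
  simp only [ascFactorial_succ, ascFactorial_zero] at h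
  push_cast at h
  linear_combination (norm := (ring_nf; reduce_mod_char)) (1 - 3 * (l : ZMod 9)) * h

theorem choose_three_mul_add_one_add_one_cast (k l : ℕ) :
    ((3 * (k + l) + 1).choose (3 * k + 1) : ZMod 9) = (k + l).choose k * (1 + 3 * l) := by
  have h := choose_three_mul_add_cast k l 1 0
  simp only [ascFactorial_succ, ascFactorial_zero] at h
  push_cast at h
  linear_combination (norm := (ring_nf; reduce_mod_char)) (1 - 3 * (k : ZMod 9)) * h

theorem choose_three_mul_add_two_add_one_cast (k l : ℕ) :
    ((3 * (k + l) + 2).choose (3 * k + 1) : ZMod 9) =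
      2 * (k + l).choose k * (1 - 3 * (k + l)) := by
  have h := choose_three_mul_add_cast k l 1 1
  simp only [ascFactorial_succ, ascFactorial_zero] at h
  push_cast at h
  linear_combination (norm := (ring_nf; reduce_mod_char))
    ((1 - 3 * (k : ZMod 9)) * (1 - 3 * (l : ZMod 9))) * h

theorem three_dvd_choose_three_mul_add {A B ε δ : ℕ} (hεδ : ε < δ) (hδ : δ < 3) :
    3 ∣ (3 * A + ε).choose (3 * B + δ) := by
  have := Choose.choose_modEq_choose_mod_mul_choose_div_nat (p := 3) (n := 3 * A + ε)
    (k := 3 * B + δ)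
  rw [mul_add_mod, mul_add_mod, mod_eq_of_lt (hεδ.trans hδ), mod_eq_of_lt hδ,
    choose_eq_zero_of_lt hεδ, zero_mul] at this
  exact modEq_zero_iff_dvd.mp this

end BinomialModNine

section PowersModNine

theorem one_add_three_mul_pow (y : ZMod 9) (n : ℕ) : (1 + 3 * y) ^ n = 1 + 3 * n * y := by
  induction n with
  | zero => simp
  | succ n ih =>
    rw [pow_succ, ih]
    push_cast
    ring_nf
    reduce_mod_char

theorem one_add_three_mul_pow_of_mod_three_eq_two {r : ℕ} (hr3 : r % 3 = 2) (y : ZMod 9) :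
    (1 + 3 * y) ^ r = 1 + 6 * y := by
  rw [one_add_three_mul_pow, ← div_add_mod r 3, hr3]
  push_cast
  ring_nf
  reduce_mod_char

theorem one_add_three_mul_pow_of_three_dvd {s : ℕ} (hs : 3 ∣ s) (y : ZMod 9) :
    (1 + 3 * y) ^ s = 1 := by
  obtain ⟨s, rfl⟩ := hs
  rw [one_add_three_mul_pow]
  push_cast
  ring_nf
  reduce_mod_char

theorem two_pow_of_six_dvd {s : ℕ} (hs : 6 ∣ s) : (2 : ZMod 9) ^ s = 1 := by
  obtain ⟨s, rfl⟩ := hs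
  rw [pow_mul, show (2 : ZMod 9) ^ 6 = 1 by decide, one_pow]

theorem natCast_pow_eq_zero_of_three_dvd {c e : ℕ} (hc : 3 ∣ c) (he : 2 ≤ e) :
    (c : ZMod 9) ^ e = 0 := by
  obtain ⟨c, rfl⟩ := hc
  obtain ⟨e, rfl⟩ := exists_add_of_le he
  push_cast
  rw [mul_pow, pow_add, show (3 : ZMod 9) ^ 2 = 0 by decide, zero_mul, zero_mul]

end PowersModNine

theorem sum_range_mul_eq_sum_sum {M : Type*} [AddCommMonoid M] (f : ℕ → M) (m N : ℕ) :
    ∑ k ∈ range (m * N), f k = ∑ K ∈ range N, ∑ i ∈ range m, f (m * K + i) := by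
  induction N with
  | zero => simp
  | succ N ih => rw [mul_add_one, sum_range_add, ih, sum_range_succ]

section Recurrence

def aperyTerm (r s n k : ℕ) : ℕ := n.choose k ^ r * (n + k).choose k ^ s

def recurrenceFactor (j q : ℕ) : ZMod 9 := if j = 1 then 2 * (1 + 3 * q) else 1

theorem recurrenceFactor_three_mul_add (j q b : ℕ) :
    recurrenceFactor j (3 * q + b) = recurrenceFactor j b := by
  simp only [recurrenceFactor]
  push_cast
  ring_nf
  reduce_mod_char

theorem apery_eq_sum_aperyTerm (r s n : ℕ) :
    apery r s n = ∑ k ∈ range (n + 1), aperyTerm r s n k := rfl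

variable {r s : ℕ}

theorem apery_three_mul_add_eq_sum_blocks (hr : r ≠ 0) {j : ℕ} (hj : j ≤ 2) (q : ℕ) :
    apery r s (3 * q + j) =
      ∑ K ∈ range (q + 1), ∑ i ∈ range 3, aperyTerm r s (3 * q + j) (3 * K + i) := by
  rw [← sum_range_mul_eq_sum_sum, apery]
  refine sum_subset (range_subset_range.mpr (by omega)) fun k _ hk => ?_
  rw [mem_range, not_lt] at hk
  rw [choose_eq_zero_of_lt (show 3 * q + j < k by omega), zero_pow hr, zero_mul]

theorem sum_aperyTerm_three_mul (hr : 2 ≤ r) (K l : ℕ) :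
    ∑ i ∈ range 3, (aperyTerm r s (3 * (K + l)) (3 * K + i) : ZMod 9) =
      aperyTerm r s (K + l) K := by
  have hdvd {i : ℕ} (hi0 : 0 < i) (hi3 : i < 3) :
      (((3 * (K + l)).choose (3 * K + i) : ℕ) : ZMod 9) ^ r = 0 :=
    natCast_pow_eq_zero_of_three_dvd (three_dvd_choose_three_mul_add (ε := 0) hi0 hi3) hr
  simp only [sum_range_succ, sum_range_zero, aperyTerm, Nat.cast_mul, Nat.cast_pow,
    hdvd one_pos (by norm_num), hdvd two_pos (by norm_num), add_zero, zero_mul, zero_add]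
  rw [show 3 * (K + l) + 3 * K = 3 * (K + (K + l)) by ring, choose_three_mul_cast,
    choose_three_mul_cast, show K + (K + l) = K + l + K by ring]

theorem sum_aperyTerm_three_mul_add_two (hs : 2 ≤ s) (K l : ℕ) :
    ∑ i ∈ range 3, (aperyTerm r s (3 * (K + l) + 2) (3 * K + i) : ZMod 9) =
      aperyTerm r s (K + l) K := by
  have hdvd {i : ℕ} (hi0 : 0 < i) (hi3 : i < 3) :
      (((3 * (K + l) + 2 + (3 * K + i)).choose (3 * K + i) : ℕ) : ZMod 9) ^ s = 0 := by
    rw [show 3 * (K + l) + 2 + (3 * K + i) = 3 * (2 * K + l + 1) + (i - 1) by omega]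
    exact natCast_pow_eq_zero_of_three_dvd (three_dvd_choose_three_mul_add (by omega) hi3) hs
  simp only [sum_range_succ, sum_range_zero, aperyTerm, Nat.cast_mul, Nat.cast_pow,
    hdvd one_pos (by norm_num), hdvd two_pos (by norm_num), add_zero, mul_zero, zero_add]
  rw [show 3 * (K + l) + 2 + 3 * K = 3 * (K + (K + l)) + 2 by ring,
    choose_three_mul_add_two_cast, choose_three_mul_add_two_cast,
    show K + (K + l) = K + l + K by ring]

-- The terms `k = 3K` and `k = 3K + 1` contribute `1 + 6K` and `1 + 6l` times the term of `q`.
theorem sum_aperyTerm_three_mul_add_one (hr3 : r % 3 = 2) (hs6 : 6 ∣ s) (K l : ℕ) :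
    ∑ i ∈ range 3, (aperyTerm r s (3 * (K + l) + 1) (3 * K + i) : ZMod 9) =
      2 * (1 + 3 * ((K + l : ℕ) : ZMod 9)) * aperyTerm r s (K + l) K := by
  have hs3 : 3 ∣ s := (by norm_num : 3 ∣ 6).trans hs6
  have hdvd : (((3 * (K + l) + 1).choose (3 * K + 2) : ℕ) : ZMod 9) ^ r = 0 :=
    natCast_pow_eq_zero_of_three_dvd (three_dvd_choose_three_mul_add (by norm_num) (by norm_num))
      (by omega)
  simp only [sum_range_succ, sum_range_zero, aperyTerm, Nat.cast_mul, Nat.cast_pow, hdvd,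
    add_zero, zero_mul, zero_add]
  rw [show 3 * (K + l) + 1 + 3 * K = 3 * (K + (K + l)) + 1 by ring,
    show 3 * (K + l) + 1 + (3 * K + 1) = 3 * (K + (K + l)) + 2 by ring,
    choose_three_mul_add_one_cast, choose_three_mul_add_one_add_one_cast,
    choose_three_mul_add_one_cast, choose_three_mul_add_two_add_one_cast,
    show K + (K + l) = K + l + K by ring]
  simp only [mul_pow, one_add_three_mul_pow_of_mod_three_eq_two hr3,
    one_add_three_mul_pow_of_three_dvd hs3, two_pow_of_six_dvd hs6,
    sub_eq_add_neg, ← mul_neg]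
  push_cast
  ring

theorem apery_three_mul_add_cast (hr3 : r % 3 = 2) (hs6 : 6 ∣ s) (hs : 0 < s) {j : ℕ}
    (hj : j ≤ 2) (q : ℕ) :
    (apery r s (3 * q + j) : ZMod 9) = recurrenceFactor j q * apery r s q := by
  rw [apery_three_mul_add_eq_sum_blocks (by omega) hj, apery_eq_sum_aperyTerm, Nat.cast_sum,
    Nat.cast_sum, mul_sum]
  refine sum_congr rfl fun K hK => ?_
  obtain ⟨l, rfl⟩ := exists_add_of_le (mem_range_succ_iff.mp hK)
  rw [Nat.cast_sum]
  interval_cases j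
  · simpa [recurrenceFactor] using sum_aperyTerm_three_mul (s := s) (by omega) K l
  · simpa [recurrenceFactor] using sum_aperyTerm_three_mul_add_one hr3 hs6 K l
  · simpa [recurrenceFactor] using
      sum_aperyTerm_three_mul_add_two (r := r) ((le_of_dvd hs hs6).trans' (by norm_num)) K l

end Recurrence

section Digits

theorem digitCount_zero (d : ℕ → ℕ) (v : ℕ) :
    digitCount d 0 v = if d 0 = v then 1 else 0 := by
  rw [digitCount, card_filter, sum_range_one]

theorem digitCount_succ (d : ℕ → ℕ) (m v : ℕ) :
    digitCount d (m + 1) v = (if d 0 = v then 1 else 0) + digitCount (fun i => d (i + 1)) m v := by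
  rw [digitCount, digitCount, card_filter, card_filter, sum_range_succ', add_comm]

theorem occ_eq_sum_range (d : ℕ → ℕ) (m a b : ℕ) :
    occ d m a b = ∑ i ∈ range (m + 1), if d (i + 1) = a ∧ d i = b then 1 else 0 := by
  rw [occ, card_filter, ← Ico_add_one_right_eq_Icc, range_eq_Ico, ← zero_add 1,
    ← sum_Ico_add']
  simp

theorem occ_zero (d : ℕ → ℕ) (a b : ℕ) :
    occ d 0 a b = if d 1 = a ∧ d 0 = b then 1 else 0 := by
  rw [occ_eq_sum_range, sum_range_one]

theorem occ_succ (d : ℕ → ℕ) (m a b : ℕ) :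
    occ d (m + 1) a b =
      (if d 1 = a ∧ d 0 = b then 1 else 0) + occ (fun i => d (i + 1)) m a b := by
  rw [occ_eq_sum_range, occ_eq_sum_range, sum_range_succ', add_comm]

theorem sum_range_succ_mul_pow (d : ℕ → ℕ) (b m : ℕ) :
    ∑ i ∈ range (m + 1), d i * b ^ i = b * ∑ i ∈ range m, d (i + 1) * b ^ i + d 0 := by
  rw [sum_range_succ', mul_sum]
  simp only [pow_succ, pow_zero, mul_one]
  congr 1
  exact sum_congr rfl fun i _ => by ring

-- A new lowest digit `a` followed by `b` adds a digit `1` and an occurrence of `11` or `21`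
-- exactly when `a = 1` and `b = 1` or `b = 2` respectively.
theorem recurrenceFactor_mul {a b : ℕ} (ha : a ≤ 2) (hb : b ≤ 2) (t u v : ℕ) :
    recurrenceFactor a b * (2 ^ t * (1 + 3 * ((u : ZMod 9) - v))) =
      2 ^ ((if a = 1 then 1 else 0) + t) *
        (1 + 3 * ((((if b = 1 ∧ a = 1 then 1 else 0) + u : ℕ) : ZMod 9) -
          ((if b = 2 ∧ a = 1 then 1 else 0) + v : ℕ))) := by
  interval_cases a <;> interval_cases b <;> norm_num [recurrenceFactor] <;>
    linear_combination (norm := (ring_nf <;> reduce_mod_char))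

theorem apery_digits_cast {r s : ℕ} (hr3 : r % 3 = 2) (hs6 : 6 ∣ s) (hs : 0 < s) (m : ℕ)
    (d : ℕ → ℕ) (hd2 : ∀ i, d i ≤ 2) (hd0 : ∀ i, m < i → d i = 0) :
    (apery r s (∑ i ∈ range (m + 1), d i * 3 ^ i) : ZMod 9) =
      2 ^ digitCount d m 1 * (1 + 3 * ((occ d m 1 1 : ZMod 9) - occ d m 2 1)) := by
  induction m generalizing d with
  | zero =>
    rw [sum_range_one, show d 0 * 3 ^ 0 = 3 * 0 + d 0 by ring,
      apery_three_mul_add_cast hr3 hs6 hs (hd2 0), digitCount_zero, occ_zero, occ_zero,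
      hd0 1 one_pos]
    simp [apery, recurrenceFactor]
  | succ m ih =>
    rw [sum_range_succ_mul_pow, apery_three_mul_add_cast hr3 hs6 hs (hd2 0),
      ih (fun i => d (i + 1)) (fun i => hd2 _) (fun i hi => hd0 _ (by omega)),
      sum_range_succ_mul_pow (fun i => d (i + 1)), recurrenceFactor_three_mul_add,
      digitCount_succ, occ_succ, occ_succ]
    exact recurrenceFactor_mul (hd2 0) (hd2 1) _ _ _

end Digits

section Classification

theorem exists_eq_two_mul_and_iff {t : ℕ} {P : ℕ → Prop} :
    (∃ e, t = 2 * e ∧ P e) ↔ t % 2 = 0 ∧ P (t / 2) := by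
  constructor
  · rintro ⟨e, rfl, he⟩
    exact ⟨by omega, by rwa [mul_div_cancel_left₀ e two_ne_zero]⟩
  · rintro ⟨ht, hP⟩
    exact ⟨t / 2, by omega, hP⟩

theorem exists_eq_two_mul_add_one_and_iff {t : ℕ} {P : ℕ → Prop} :
    (∃ e, t = 2 * e + 1 ∧ P e) ↔ t % 2 = 1 ∧ P (t / 2) := by
  constructor
  · rintro ⟨e, rfl, he⟩
    exact ⟨by omega, by rwa [show (2 * e + 1) / 2 = e by omega]⟩
  · rintro ⟨ht, hP⟩
    exact ⟨t / 2, by omega, hP⟩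

theorem two_pow_mul_one_add_three_mul_eq_iff {x : ZMod 9} {b : ℕ} {c : ℤ} (hb : b < 2)
    (hc0 : 0 ≤ c) (hc3 : c < 3) (hx : x = 2 ^ b * (1 + 3 * c)) :
    (x = 1 ↔ b = 0 ∧ c = 0) ∧ (x = 4 ↔ b = 0 ∧ c = 1) ∧ (x = 7 ↔ b = 0 ∧ c = 2) ∧
      (x = 2 ↔ b = 1 ∧ c = 0) ∧ (x = 8 ↔ b = 1 ∧ c = 1) ∧ (x = 5 ↔ b = 1 ∧ c = 2) ∧
      x ≠ 3 ∧ x ≠ 6 := by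
  subst hx
  interval_cases b <;> interval_cases c <;> decide

theorem two_pow_two_mul (e : ℕ) : (2 : ZMod 9) ^ (2 * e) = 1 + 3 * (e : ZMod 9) := by
  rw [pow_mul, show (2 : ZMod 9) ^ 2 = 1 + 3 * 1 by decide, one_add_three_mul_pow, mul_one]

theorem modEq_nine_iff_of_cast_eq {X t u v : ℕ}
    (hX : (X : ZMod 9) = 2 ^ t * (1 + 3 * ((u : ZMod 9) - v))) :
    (X ≡ 1 [MOD 9] ↔ ∃ e, t = 2 * e ∧ ((e : ℤ) + u - v) % 3 = 0) ∧
    (X ≡ 4 [MOD 9] ↔ ∃ e, t = 2 * e ∧ ((e : ℤ) + u - v) % 3 = 1) ∧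
    (X ≡ 7 [MOD 9] ↔ ∃ e, t = 2 * e ∧ ((e : ℤ) + u - v) % 3 = 2) ∧
    (X ≡ 2 [MOD 9] ↔ ∃ e, t = 2 * e + 1 ∧ ((e : ℤ) + u - v) % 3 = 0) ∧
    (X ≡ 8 [MOD 9] ↔ ∃ e, t = 2 * e + 1 ∧ ((e : ℤ) + u - v) % 3 = 1) ∧
    (X ≡ 5 [MOD 9] ↔ ∃ e, t = 2 * e + 1 ∧ ((e : ℤ) + u - v) % 3 = 2) ∧
    ¬ X ≡ 3 [MOD 9] ∧ ¬ X ≡ 6 [MOD 9] := by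
  have hx : (X : ZMod 9) = 2 ^ (t % 2) * (1 + 3 * ((((t / 2 : ℕ) : ℤ) + u - v) % 3 : ℤ)) := by
    have h2t : (2 : ZMod 9) ^ t = 2 ^ (t % 2) * (1 + 3 * ((t / 2 : ℕ) : ZMod 9)) := by
      rw [← two_pow_two_mul, ← pow_add, mod_add_div]
    rw [hX, h2t, Int.emod_def]
    simp only [Int.cast_sub, Int.cast_add, Int.cast_mul, Int.cast_natCast, Int.cast_ofNat]
    ring_nf
    reduce_mod_char
  simp only [← ZMod.natCast_eq_natCast_iff, exists_eq_two_mul_and_iff,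
    exists_eq_two_mul_add_one_and_iff, Nat.cast_ofNat, Nat.cast_one]
  exact two_pow_mul_one_add_three_mul_eq_iff (mod_lt t two_pos) (Int.emod_nonneg _ three_ne_zero)
    (Int.emod_lt_of_pos _ three_pos) hx

end Classification

end Apery

theorem apery_mod_nine_r2_s0_general (r s : ℕ) (hs : 0 < s) (hr3 : r % 3 = 2) (hs6 : s % 6 = 0)
    (n m : ℕ) (d : ℕ → ℕ) (hd2 : ∀ i, d i ≤ 2) (hd0 : ∀ i, m < i → d i = 0)
    (hn : n = ∑ i ∈ Finset.range (m + 1), d i * 3 ^ i) :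
    (apery r s n ≡ 1 [MOD 9] ↔ ∃ e, digitCount d m 1 = 2 * e ∧
      ((e : ℤ) + (occ d m 1 1 : ℤ) - (occ d m 2 1 : ℤ)) % 3 = 0) ∧
    (apery r s n ≡ 4 [MOD 9] ↔ ∃ e, digitCount d m 1 = 2 * e ∧
      ((e : ℤ) + (occ d m 1 1 : ℤ) - (occ d m 2 1 : ℤ)) % 3 = 1) ∧
    (apery r s n ≡ 7 [MOD 9] ↔ ∃ e, digitCount d m 1 = 2 * e ∧
      ((e : ℤ) + (occ d m 1 1 : ℤ) - (occ d m 2 1 : ℤ)) % 3 = 2) ∧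
    (apery r s n ≡ 2 [MOD 9] ↔ ∃ e, digitCount d m 1 = 2 * e + 1 ∧
      ((e : ℤ) + (occ d m 1 1 : ℤ) - (occ d m 2 1 : ℤ)) % 3 = 0) ∧
    (apery r s n ≡ 8 [MOD 9] ↔ ∃ e, digitCount d m 1 = 2 * e + 1 ∧
      ((e : ℤ) + (occ d m 1 1 : ℤ) - (occ d m 2 1 : ℤ)) % 3 = 1) ∧
    (apery r s n ≡ 5 [MOD 9] ↔ ∃ e, digitCount d m 1 = 2 * e + 1 ∧
      ((e : ℤ) + (occ d m 1 1 : ℤ) - (occ d m 2 1 : ℤ)) % 3 = 2) ∧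
    ¬ (apery r s n ≡ 3 [MOD 9]) ∧
    ¬ (apery r s n ≡ 6 [MOD 9]) := by
  subst hn
  exact Apery.modEq_nine_iff_of_cast_eq
    (Apery.apery_digits_cast hr3 (Nat.dvd_of_mod_eq_zero hs6) hs m d hd2 hd0)

/-- Apéry numbers mod 9 for `r ≡ 2 (mod 3)`, `s ≡ 0 (mod 6)`. -/
theorem apery_mod_nine_r2_s0 (r s : ℕ) (hr : 0 < r) (hs : 0 < s) (hr3 : r % 3 = 2) (hs6 : s % 6 = 0)
    (n m : ℕ) (d : ℕ → ℕ) (hd2 : ∀ i, d i ≤ 2) (hd0 : ∀ i, m < i → d i = 0)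
    (hn : n = ∑ i ∈ Finset.range (m + 1), d i * 3 ^ i) :
    (apery r s n ≡ 1 [MOD 9] ↔ ∃ e, digitCount d m 1 = 2 * e ∧
      ((e : ℤ) + (occ d m 1 1 : ℤ) - (occ d m 2 1 : ℤ)) % 3 = 0) ∧
    (apery r s n ≡ 4 [MOD 9] ↔ ∃ e, digitCount d m 1 = 2 * e ∧
      ((e : ℤ) + (occ d m 1 1 : ℤ) - (occ d m 2 1 : ℤ)) % 3 = 1) ∧
    (apery r s n ≡ 7 [MOD 9] ↔ ∃ e, digitCount d m 1 = 2 * e ∧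
      ((e : ℤ) + (occ d m 1 1 : ℤ) - (occ d m 2 1 : ℤ)) % 3 = 2) ∧
    (apery r s n ≡ 2 [MOD 9] ↔ ∃ e, digitCount d m 1 = 2 * e + 1 ∧
      ((e : ℤ) + (occ d m 1 1 : ℤ) - (occ d m 2 1 : ℤ)) % 3 = 0) ∧
    (apery r s n ≡ 8 [MOD 9] ↔ ∃ e, digitCount d m 1 = 2 * e + 1 ∧
      ((e : ℤ) + (occ d m 1 1 : ℤ) - (occ d m 2 1 : ℤ)) % 3 = 1) ∧
    (apery r s n ≡ 5 [MOD 9] ↔ ∃ e, digitCount d m 1 = 2 * e + 1 ∧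
      ((e : ℤ) + (occ d m 1 1 : ℤ) - (occ d m 2 1 : ℤ)) % 3 = 2) ∧
    ¬ (apery r s n ≡ 3 [MOD 9]) ∧
    ¬ (apery r s n ≡ 6 [MOD 9]) :=
  apery_mod_nine_r2_s0_general r s hs hr3 hs6 n m d hd2 hd0 hn
end

section
/- Let r and s be positive integers such that either (r \equiv 1 (mod 6), s \equiv 1 (mod 6), r \ge 7, and s \ge 7) or (r \equiv 4 (mod 6) and s \equiv 1 (mod 6)). Then for every nonnegative integer n: (i) a_n(r,s) \equiv 1 (mod 9) iff every digit of n is 0 or 2; (ii) a_n(r,s) \equiv 3 (mod 9) iff exactly one digit of n equals 1, this digit is not part of an occurrence of the string 11, and all other digits are 0 or 2; (iii) a_n(r,s) \equiv 6 (mod 9) iff the 3-adic expansion of n has exactly one occurrence of the string 11 and all digits of n not belonging to this occurrence are 0 or 2; (iv) in all other cases 9 divides a_n(r,s); in particular a_n(r,s) is never \equiv 2, 4, 5, 7, or 8 (mod 9). -/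
open Finset

/-!
Write `T(n, k) = C(n,k)^r C(n+k,k)^s`, so that `a_n = ∑ₖ T(n, k)`, and let
`b_n = ∑ₖ (k + 1) T(n, k)`. Lucas-type congruences modulo 9 for `C(3a + i, 3b + j)`, proved by
induction on `a` with Pascal's rule, express the three summands `T(3n + e, 3k + i)` through
`T(n, k)`. Summing over blocks of three gives
`a_{3n} ≡ a_{3n+2} ≡ a_n`, `a_{3n+1} ≡ 3 b_n (mod 9)` and
`b_{3n} ≡ b_{3n+2} ≡ a_n`, `b_{3n+1} ≡ 2 a_n (mod 3)`.
The hypotheses on `r` and `s` enter only here, through `3^r = 0`, `x^r = x` for `x ≡ 1 (mod 3)`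
and `x^s = x` for units `x` of `ZMod 9`, and, for `a_{3n+2}`, `3^s = 0` or `r` even.

Reading the base-3 digits of `n` from the bottom, digits `0` and `2` do not change `a_n mod 9`.
At the lowest digit `1` the residue becomes `3 c a_{n'}`, where `c = 2` or `1` according as the
next digit is `1` or not, and `n'` is formed by the digits above these two. As
`a_{n'} ≡ 1` or `0 (mod 3)` according as `n'` has no digit `1` or some, the residue is `3`, `6`
or `0`.
-/

lemma choose_succ_three_mul_succ (N b : ℕ) :
    (N + 1).choose (3 * (b + 1)) = N.choose (3 * b + 2) + N.choose (3 * (b + 1)) := by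
  rw [show 3 * (b + 1) = 3 * b + 2 + 1 by ring, Nat.choose_succ_succ]

lemma cast_succ_mul_choose_succ {R : Type*} [CommSemiring R] (a b : ℕ) :
    ((b + 1 : ℕ) : R) * a.choose (b + 1) = (a - b : ℕ) * a.choose b := by
  rw [mul_comm, ← Nat.cast_mul, Nat.choose_succ_right_eq, Nat.cast_mul, mul_comm]

lemma cast_choose_three_mul_add_one_of {a : ℕ}
    (h : ∀ b, ((3 * a).choose (3 * b) : ZMod 9) = a.choose b ∧
      ((3 * a).choose (3 * b + 1) : ZMod 9) = 3 * (a - b : ℕ) * a.choose b ∧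
      ((3 * a).choose (3 * b + 2) : ZMod 9) = 3 * (a - b : ℕ) * a.choose b) (b : ℕ) :
    ((3 * a + 1).choose (3 * b) : ZMod 9) = (1 + 3 * b) * a.choose b ∧
    ((3 * a + 1).choose (3 * b + 1) : ZMod 9) = (1 + 3 * (a - b : ℕ)) * a.choose b ∧
    ((3 * a + 1).choose (3 * b + 2) : ZMod 9) = 6 * (a - b : ℕ) * a.choose b := by
  refine ⟨?_, ?_, ?_⟩
  · cases b with
    | zero => simp
    | succ b =>
      rw [choose_succ_three_mul_succ, Nat.cast_add, (h b).2.2, (h (b + 1)).1]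
      linear_combination (-3 : ZMod 9) * cast_succ_mul_choose_succ (R := ZMod 9) a b
  · rw [Nat.choose_succ_succ, Nat.cast_add, (h b).1, (h b).2.1]
    ring
  · rw [Nat.choose_succ_succ, Nat.cast_add, (h b).2.1, (h b).2.2]
    ring

lemma cast_choose_three_mul_add_two_of {a : ℕ}
    (h : ∀ b, ((3 * a + 1).choose (3 * b) : ZMod 9) = (1 + 3 * b) * a.choose b ∧
      ((3 * a + 1).choose (3 * b + 1) : ZMod 9) = (1 + 3 * (a - b : ℕ)) * a.choose b ∧
      ((3 * a + 1).choose (3 * b + 2) : ZMod 9) = 6 * (a - b : ℕ) * a.choose b) (b : ℕ) :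
    ((3 * a + 2).choose (3 * b) : ZMod 9) = a.choose b ∧
    ((3 * a + 2).choose (3 * b + 1) : ZMod 9) = (2 + 3 * a) * a.choose b ∧
    ((3 * a + 2).choose (3 * b + 2) : ZMod 9) = a.choose b := by
  have h9 : (9 : ZMod 9) = 0 := rfl
  refine ⟨?_, ?_, ?_⟩
  · cases b with
    | zero => simp
    | succ b =>
      rw [choose_succ_three_mul_succ, Nat.cast_add, (h b).2.2, (h (b + 1)).1]
      linear_combination (-6 : ZMod 9) * cast_succ_mul_choose_succ (R := ZMod 9) a b +
        ((b + 1 : ℕ) * a.choose (b + 1) : ZMod 9) * h9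
  · rw [Nat.choose_succ_succ, Nat.cast_add, (h b).1, (h b).2.1]
    rcases le_or_gt b a with hba | hab
    · rw [Nat.cast_sub hba]
      ring
    · simp [Nat.choose_eq_zero_of_lt hab]
  · rw [Nat.choose_succ_succ, Nat.cast_add, (h b).2.1, (h b).2.2]
    linear_combination ((a - b : ℕ) * a.choose b : ZMod 9) * h9

lemma cast_choose_three_mul_succ_of {a : ℕ}
    (h : ∀ b, ((3 * a + 2).choose (3 * b) : ZMod 9) = a.choose b ∧
      ((3 * a + 2).choose (3 * b + 1) : ZMod 9) = (2 + 3 * a) * a.choose b ∧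
      ((3 * a + 2).choose (3 * b + 2) : ZMod 9) = a.choose b) (b : ℕ) :
    ((3 * (a + 1)).choose (3 * b) : ZMod 9) = (a + 1).choose b ∧
    ((3 * (a + 1)).choose (3 * b + 1) : ZMod 9) = 3 * (a + 1 - b : ℕ) * (a + 1).choose b ∧
    ((3 * (a + 1)).choose (3 * b + 2) : ZMod 9) = 3 * (a + 1 - b : ℕ) * (a + 1).choose b := by
  have absorb : ((a + 1 - b : ℕ) : ZMod 9) * (a + 1).choose b = (a + 1) * a.choose b := by
    rw [← Nat.cast_mul, mul_comm, ← Nat.choose_mul_succ_eq]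
    push_cast
    ring
  rw [show 3 * (a + 1) = 3 * a + 2 + 1 by ring]
  refine ⟨?_, ?_, ?_⟩
  · cases b with
    | zero => simp
    | succ b =>
      rw [choose_succ_three_mul_succ, Nat.cast_add, (h b).2.2, (h (b + 1)).1,
        Nat.choose_succ_succ, Nat.cast_add]
  · rw [Nat.choose_succ_succ, Nat.cast_add, (h b).1, (h b).2.1, mul_assoc, absorb]
    ring
  · rw [Nat.choose_succ_succ, Nat.cast_add, (h b).2.1, (h b).2.2, mul_assoc, absorb]
    ring

-- `a - b` is truncated, which is harmless: `a.choose b = 0` when `b > a`.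
theorem cast_choose_three_mul (a b : ℕ) :
    ((3 * a).choose (3 * b) : ZMod 9) = a.choose b ∧
    ((3 * a).choose (3 * b + 1) : ZMod 9) = 3 * (a - b : ℕ) * a.choose b ∧
    ((3 * a).choose (3 * b + 2) : ZMod 9) = 3 * (a - b : ℕ) * a.choose b := by
  induction a generalizing b with
  | zero => cases b <;> simp [Nat.choose_eq_zero_of_lt]
  | succ a ih =>
    exact cast_choose_three_mul_succ_of
      (cast_choose_three_mul_add_two_of (cast_choose_three_mul_add_one_of ih)) b

theorem cast_choose_three_mul_add_one (a b : ℕ) :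
    ((3 * a + 1).choose (3 * b) : ZMod 9) = (1 + 3 * b) * a.choose b ∧
    ((3 * a + 1).choose (3 * b + 1) : ZMod 9) = (1 + 3 * (a - b : ℕ)) * a.choose b ∧
    ((3 * a + 1).choose (3 * b + 2) : ZMod 9) = 6 * (a - b : ℕ) * a.choose b :=
  cast_choose_three_mul_add_one_of (cast_choose_three_mul a) b

theorem cast_choose_three_mul_add_two (a b : ℕ) :
    ((3 * a + 2).choose (3 * b) : ZMod 9) = a.choose b ∧
    ((3 * a + 2).choose (3 * b + 1) : ZMod 9) = (2 + 3 * a) * a.choose b ∧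
    ((3 * a + 2).choose (3 * b + 2) : ZMod 9) = a.choose b :=
  cast_choose_three_mul_add_two_of (cast_choose_three_mul_add_one a) b

lemma pow_eq_self_of_pow_eq_one {M : Type*} [Monoid M] {x : M} {p t : ℕ} (hx : x ^ p = 1)
    (ht : t % p = 1) : x ^ t = x := by
  rw [pow_eq_pow_mod t hx, ht, pow_one]

lemma mul_pow_eq_of_mul_eq {M : Type*} [Monoid M] {a x : M} (h : a * x = a) (t : ℕ) :
    a * x ^ t = a := by
  induction t with
  | zero => simp
  | succ t ih => rw [pow_succ, ← mul_assoc, ih, h]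

namespace ZMod

lemma three_pow_eq_zero {t : ℕ} (ht : 2 ≤ t) : (3 : ZMod 9) ^ t = 0 :=
  pow_eq_zero_of_le ht (by decide)

lemma six_pow_eq_zero {t : ℕ} (ht : 2 ≤ t) : (6 : ZMod 9) ^ t = 0 :=
  pow_eq_zero_of_le ht (by decide)

lemma one_add_three_mul_pow (u : ZMod 9) {t : ℕ} (ht : t % 3 = 1) : (1 + 3 * u) ^ t = 1 + 3 * u :=
  pow_eq_self_of_pow_eq_one (by revert u; decide) ht

lemma two_add_three_mul_pow (v : ZMod 9) {t : ℕ} (ht : t % 6 = 1) : (2 + 3 * v) ^ t = 2 + 3 * v :=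
  pow_eq_self_of_pow_eq_one (by revert v; decide) ht

lemma three_mul_two_add_three_mul_pow (v : ZMod 9) {t : ℕ} (ht : Even t) :
    3 * (2 + 3 * v) ^ t = 3 := by
  obtain ⟨t, rfl⟩ := ht
  rw [← two_mul, pow_mul]
  exact mul_pow_eq_of_mul_eq (by revert v; decide) t

end ZMod

lemma sum_range_three_mul {M : Type*} [AddCommMonoid M] (f : ℕ → M) (n : ℕ) :
    ∑ j ∈ range (3 * n), f j = ∑ k ∈ range n, (f (3 * k) + f (3 * k + 1) + f (3 * k + 2)) := by
  induction n with
  | zero => simp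
  | succ n ih =>
    rw [show 3 * (n + 1) = 3 * n + 1 + 1 + 1 by ring, sum_range_succ, sum_range_succ,
      sum_range_succ, ih, sum_range_succ]
    abel

lemma sum_range_succ_eq_sum_range_three_mul {M : Type*} [AddCommMonoid M] {f : ℕ → M}
    {N n : ℕ} (hN : N < 3 * (n + 1)) (hf : ∀ j, N < j → f j = 0) :
    ∑ j ∈ range (N + 1), f j =
      ∑ k ∈ range (n + 1), (f (3 * k) + f (3 * k + 1) + f (3 * k + 2)) := by
  rw [← sum_range_three_mul]
  refine sum_subset (range_subset_range.2 (by omega)) fun j _ hj => hf j ?_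
  simp only [mem_range, not_lt] at hj
  omega

-- The congruences modulo 3 for `b_n` are proved as congruences modulo 9 for `3 b_n`, so that
-- the evaluation of the summands modulo 9 serves both `a_n` and `b_n`.
lemma modEq_three_of_three_mul {a b : ℕ} (h : (3 * a : ZMod 9) = 3 * b) : a ≡ b [MOD 3] :=
  Nat.ModEq.mul_left_cancel' three_ne_zero
    ((ZMod.natCast_eq_natCast_iff _ _ 9).1 (by push_cast; exact h))

def weightedApery (r s n : ℕ) : ℕ := ∑ k ∈ range (n + 1), aperyTerm r s n k * (k + 1)

section Recurrences

variable {r s : ℕ}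

lemma cast_apery {R : Type*} [CommSemiring R] (n : ℕ) :
    (apery r s n : R) = ∑ k ∈ range (n + 1), (aperyTerm r s n k : R) := by
  simp [apery, aperyTerm]

lemma aperyTerm_eq_zero_of_lt (hr : r ≠ 0) {n k : ℕ} (h : n < k) : aperyTerm r s n k = 0 := by
  simp [aperyTerm, Nat.choose_eq_zero_of_lt h, hr]

lemma cast_apery_eq_sum_blocks {R : Type*} [CommSemiring R] (hr : r ≠ 0) {N n : ℕ}
    (hN : N < 3 * (n + 1)) :
    (apery r s N : R) = ∑ k ∈ range (n + 1), ((aperyTerm r s N (3 * k) : R) +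
      aperyTerm r s N (3 * k + 1) + aperyTerm r s N (3 * k + 2)) := by
  rw [cast_apery, sum_range_succ_eq_sum_range_three_mul hN fun j hj => by
    simp [aperyTerm_eq_zero_of_lt hr hj]]

lemma cast_weightedApery_eq_sum_blocks {R : Type*} [CommSemiring R] (hr : r ≠ 0) {N n : ℕ}
    (hN : N < 3 * (n + 1)) :
    (weightedApery r s N : R) = ∑ k ∈ range (n + 1),
      ((aperyTerm r s N (3 * k) : R) * (3 * k + 1) + aperyTerm r s N (3 * k + 1) * (3 * k + 2) +
        aperyTerm r s N (3 * k + 2) * (3 * k + 3)) := by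
  rw [weightedApery, Nat.cast_sum, sum_range_succ_eq_sum_range_three_mul hN fun j hj => by
    simp [aperyTerm_eq_zero_of_lt hr hj]]
  refine sum_congr rfl fun k _ => ?_
  push_cast
  ring

lemma cast_aperyTerm_three_mul (hr : 2 ≤ r) (n k : ℕ) :
    (aperyTerm r s (3 * n) (3 * k) : ZMod 9) = aperyTerm r s n k ∧
    (aperyTerm r s (3 * n) (3 * k + 1) : ZMod 9) = 0 ∧
    (aperyTerm r s (3 * n) (3 * k + 2) : ZMod 9) = 0 := by
  obtain ⟨h₀, h₁, h₂⟩ := cast_choose_three_mul n k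
  simp only [aperyTerm, Nat.cast_mul, Nat.cast_pow, show 3 * n + 3 * k = 3 * (n + k) by ring,
    h₀, h₁, h₂, (cast_choose_three_mul (n + k) k).1, mul_pow, ZMod.three_pow_eq_zero hr,
    zero_mul, and_self]

lemma cast_aperyTerm_three_mul_add_one (hr2 : 2 ≤ r) (hr : r % 3 = 1) (hs : s % 6 = 1)
    {n k : ℕ} (hk : k ≤ n) :
    (aperyTerm r s (3 * n + 1) (3 * k) : ZMod 9) = (1 + 6 * k) * aperyTerm r s n k ∧
    (aperyTerm r s (3 * n + 1) (3 * k + 1) : ZMod 9) = (2 - 3 * k) * aperyTerm r s n k ∧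
    (aperyTerm r s (3 * n + 1) (3 * k + 2) : ZMod 9) = 0 := by
  have h9 : (9 : ZMod 9) = 0 := rfl
  obtain ⟨h₀, h₁, h₂⟩ := cast_choose_three_mul_add_one n k
  simp only [aperyTerm, Nat.cast_mul, Nat.cast_pow, h₀, h₁, h₂,
    show 3 * n + 1 + 3 * k = 3 * (n + k) + 1 by ring,
    show 3 * n + 1 + (3 * k + 1) = 3 * (n + k) + 2 by ring,
    (cast_choose_three_mul_add_one (n + k) k).1, (cast_choose_three_mul_add_two (n + k) k).2.1,
    mul_pow, ZMod.one_add_three_mul_pow _ hr, ZMod.one_add_three_mul_pow _ (by omega : s % 3 = 1),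
    ZMod.two_add_three_mul_pow _ hs, ZMod.six_pow_eq_zero hr2, zero_mul, Nat.cast_sub hk,
    Nat.cast_add, and_true]
  constructor
  · linear_combination (k ^ 2 * (n.choose k : ZMod 9) ^ r * ((n + k).choose k : ZMod 9) ^ s) * h9
  · linear_combination ((n + n ^ 2 - k ^ 2) * (n.choose k : ZMod 9) ^ r *
      ((n + k).choose k : ZMod 9) ^ s) * h9

lemma cast_aperyTerm_three_mul_add_two (n k : ℕ) :
    (aperyTerm r s (3 * n + 2) (3 * k) : ZMod 9) = aperyTerm r s n k ∧
    (aperyTerm r s (3 * n + 2) (3 * k + 1) : ZMod 9) =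
      ((2 + 3 * n) * n.choose k) ^ r * (3 * (n + 1) * (n + k + 1).choose k) ^ s ∧
    (aperyTerm r s (3 * n + 2) (3 * k + 2) : ZMod 9) =
      (n.choose k : ZMod 9) ^ r * (6 * (n + 1) * (n + k + 1).choose k) ^ s := by
  obtain ⟨h₀, h₁, h₂⟩ := cast_choose_three_mul_add_two n k
  simp only [aperyTerm, Nat.cast_mul, Nat.cast_pow, h₀, h₁, h₂,
    show 3 * n + 2 + 3 * k = 3 * (n + k) + 2 by ring,
    show 3 * n + 2 + (3 * k + 1) = 3 * (n + k + 1) by ring,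
    show 3 * n + 2 + (3 * k + 2) = 3 * (n + k + 1) + 1 by ring,
    (cast_choose_three_mul_add_two (n + k) k).1, (cast_choose_three_mul (n + k + 1) k).2.1,
    (cast_choose_three_mul_add_one (n + k + 1) k).2.2, show n + k + 1 - k = n + 1 by omega,
    Nat.cast_add, Nat.cast_one, and_self]

theorem apery_three_mul_modEq (hr : 2 ≤ r) (n : ℕ) :
    apery r s (3 * n) ≡ apery r s n [MOD 9] := by
  rw [← ZMod.natCast_eq_natCast_iff,
    cast_apery_eq_sum_blocks (N := 3 * n) (n := n) (by omega) (by omega), cast_apery]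
  refine sum_congr rfl fun k _ => ?_
  obtain ⟨h₀, h₁, h₂⟩ := cast_aperyTerm_three_mul (s := s) hr n k
  rw [h₀, h₁, h₂, add_zero, add_zero]

theorem apery_three_mul_add_one_modEq (hr2 : 2 ≤ r) (hr : r % 3 = 1) (hs : s % 6 = 1)
    (n : ℕ) : apery r s (3 * n + 1) ≡ 3 * weightedApery r s n [MOD 9] := by
  rw [← ZMod.natCast_eq_natCast_iff, Nat.cast_mul, weightedApery, Nat.cast_sum, mul_sum,
    cast_apery_eq_sum_blocks (N := 3 * n + 1) (n := n) (by omega) (by omega)]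
  refine sum_congr rfl fun k hk => ?_
  obtain ⟨h₀, h₁, h₂⟩ :=
    cast_aperyTerm_three_mul_add_one hr2 hr hs (Nat.lt_succ_iff.1 (mem_range.1 hk))
  rw [h₀, h₁, h₂]
  push_cast
  ring

theorem apery_three_mul_add_two_modEq (hr : 2 ≤ r) (hs : 1 ≤ s) (hsr : 2 ≤ s ∨ Even r)
    (n : ℕ) : apery r s (3 * n + 2) ≡ apery r s n [MOD 9] := by
  have h9 : (9 : ZMod 9) = 0 := rfl
  rw [← ZMod.natCast_eq_natCast_iff,
    cast_apery_eq_sum_blocks (N := 3 * n + 2) (n := n) (by omega) (by omega), cast_apery]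
  refine sum_congr rfl fun k _ => ?_
  obtain ⟨h₀, h₁, h₂⟩ := cast_aperyTerm_three_mul_add_two (r := r) (s := s) n k
  rw [h₀, h₁, h₂]
  obtain hs2 | rfl : 2 ≤ s ∨ s = 1 := by omega
  · simp [mul_pow, ZMod.three_pow_eq_zero hs2, ZMod.six_pow_eq_zero hs2]
  · have h3 := ZMod.three_mul_two_add_three_mul_pow (n : ZMod 9) (hsr.resolve_left (by omega))
    rw [mul_pow (2 + 3 * (n : ZMod 9))]
    linear_combination ((n.choose k : ZMod 9) ^ r * (n + 1) * (n + k + 1).choose k) * (h3 + h9)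

theorem weightedApery_three_mul_modEq (hr : 2 ≤ r) (n : ℕ) :
    weightedApery r s (3 * n) ≡ apery r s n [MOD 3] := by
  have h9 : (9 : ZMod 9) = 0 := rfl
  refine modEq_three_of_three_mul ?_
  rw [cast_weightedApery_eq_sum_blocks (N := 3 * n) (n := n) (by omega) (by omega), cast_apery,
    mul_sum, mul_sum]
  refine sum_congr rfl fun k _ => ?_
  obtain ⟨h₀, h₁, h₂⟩ := cast_aperyTerm_three_mul (s := s) hr n k
  rw [h₀, h₁, h₂]
  linear_combination (k * (aperyTerm r s n k : ZMod 9)) * h9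

theorem weightedApery_three_mul_add_one_modEq (hr2 : 2 ≤ r) (hr : r % 3 = 1) (hs : s % 6 = 1)
    (n : ℕ) : weightedApery r s (3 * n + 1) ≡ 2 * apery r s n [MOD 3] := by
  have h9 : (9 : ZMod 9) = 0 := rfl
  refine modEq_three_of_three_mul ?_
  rw [cast_weightedApery_eq_sum_blocks (N := 3 * n + 1) (n := n) (by omega) (by omega),
    Nat.cast_mul, cast_apery, mul_sum, mul_sum, mul_sum]
  refine sum_congr rfl fun k hk => ?_
  obtain ⟨h₀, h₁, h₂⟩ :=
    cast_aperyTerm_three_mul_add_one hr2 hr hs (Nat.lt_succ_iff.1 (mem_range.1 hk))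
  rw [h₀, h₁, h₂]
  push_cast
  linear_combination ((3 * k ^ 2 + 3 * k + 1) * (aperyTerm r s n k : ZMod 9)) * h9

theorem weightedApery_three_mul_add_two_modEq (hr : r ≠ 0) (hs : 1 ≤ s) (n : ℕ) :
    weightedApery r s (3 * n + 2) ≡ apery r s n [MOD 3] := by
  have h9 : (9 : ZMod 9) = 0 := rfl
  refine modEq_three_of_three_mul ?_
  rw [cast_weightedApery_eq_sum_blocks (N := 3 * n + 2) (n := n) hr (by omega), cast_apery,
    mul_sum, mul_sum]
  refine sum_congr rfl fun k _ => ?_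
  obtain ⟨h₀, h₁, h₂⟩ := cast_aperyTerm_three_mul_add_two (r := r) (s := s) n k
  obtain ⟨t, rfl⟩ : ∃ t, s = t + 1 := ⟨s - 1, by omega⟩
  rw [h₀, h₁, h₂]
  set Z := ((n : ZMod 9) + 1) * (n + k + 1).choose k
  linear_combination (k * (aperyTerm r (t + 1) n k : ZMod 9) +
    ((2 + 3 * n) * n.choose k : ZMod 9) ^ r * Z * (3 * Z) ^ t * (3 * k + 2) +
    (k + 1) * (n.choose k : ZMod 9) ^ r * (6 * (n + 1) * (n + k + 1).choose k) ^ (t + 1)) * h9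

theorem weightedApery_modEq (hr2 : 2 ≤ r) (hr : r % 3 = 1) (hs : s % 6 = 1) (n : ℕ) :
    weightedApery r s n ≡ (if n % 3 = 1 then 2 else 1) * apery r s (n / 3) [MOD 3] := by
  obtain ⟨q, j, hj, rfl⟩ : ∃ q j, j < 3 ∧ n = 3 * q + j :=
    ⟨n / 3, n % 3, Nat.mod_lt _ three_pos, (Nat.div_add_mod n 3).symm⟩
  rw [show (3 * q + j) / 3 = q by omega]
  interval_cases j
  · simpa using weightedApery_three_mul_modEq hr2 q
  · simpa using weightedApery_three_mul_add_one_modEq hr2 hr hs q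
  · simpa using weightedApery_three_mul_add_two_modEq (by omega) (by omega) q

theorem apery_modEq_apery_div_three (hr : 2 ≤ r) (hs : 1 ≤ s) (hsr : 2 ≤ s ∨ Even r) {n : ℕ}
    (hn : n % 3 ≠ 1) : apery r s n ≡ apery r s (n / 3) [MOD 9] := by
  obtain h | h : n % 3 = 0 ∨ n % 3 = 2 := by omega
  · simpa [show 3 * (n / 3) = n by omega] using apery_three_mul_modEq (s := s) hr (n / 3)
  · simpa [show 3 * (n / 3) + 2 = n by omega] using apery_three_mul_add_two_modEq hr hs hsr (n / 3)

theorem apery_modEq_of_mod_three_eq_one (hr2 : 2 ≤ r) (hr : r % 3 = 1) (hs : s % 6 = 1) {n : ℕ}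
    (hn : n % 3 = 1) :
    apery r s n ≡ 3 * ((if n / 3 % 3 = 1 then 2 else 1) * apery r s (n / 3 / 3)) [MOD 9] := by
  have h := apery_three_mul_add_one_modEq (s := s) hr2 hr hs (n / 3)
  rw [show 3 * (n / 3) + 1 = n by omega] at h
  exact h.trans ((weightedApery_modEq hr2 hr hs (n / 3)).mul_left' 3)

end Recurrences

def ternaryDigit (n i : ℕ) : ℕ := n / 3 ^ i % 3

lemma ternaryDigit_zero (n : ℕ) : ternaryDigit n 0 = n % 3 := by
  simp [ternaryDigit]

lemma ternaryDigit_succ (n i : ℕ) : ternaryDigit n (i + 1) = ternaryDigit (n / 3) i := by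
  simp [ternaryDigit, pow_succ', Nat.div_div_eq_div_mul]

lemma zero_ternaryDigit (i : ℕ) : ternaryDigit 0 i = 0 := by
  simp [ternaryDigit]

theorem ternaryDigit_sum {d : ℕ → ℕ} {M : ℕ} (hd : ∀ i, d i < 3) (hM : ∀ i, M ≤ i → d i = 0) :
    ternaryDigit (∑ i ∈ range M, d i * 3 ^ i) = d := by
  induction M generalizing d with
  | zero => funext i; simp [zero_ternaryDigit, hM i (Nat.zero_le i)]
  | succ M ih =>
    set S := ∑ i ∈ range M, d (i + 1) * 3 ^ i
    have hsum : ∑ i ∈ range (M + 1), d i * 3 ^ i = 3 * S + d 0 := by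
      simp only [sum_range_succ', pow_succ, pow_zero, mul_one, S, mul_sum]
      congr 1
      exact sum_congr rfl fun i _ => by ring
    have h0 := hd 0
    funext i
    cases i with
    | zero => rw [hsum, ternaryDigit_zero]; omega
    | succ i =>
      rw [hsum, ternaryDigit_succ, show (3 * S + d 0) / 3 = S by omega,
        ih (fun i => hd (i + 1)) fun i hi => hM (i + 1) (by omega)]

def NoDigitOne (d : ℕ → ℕ) : Prop := ∀ i, d i ≠ 1

def UniqueDigitOne (d : ℕ → ℕ) : Prop := ∃! i, d i = 1

def OnesAdjacentPair (d : ℕ → ℕ) : Prop :=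
  ∃ i, d i = 1 ∧ d (i + 1) = 1 ∧ ∀ j, d j = 1 → j = i ∨ j = i + 1

section DigitPatterns

variable {d : ℕ → ℕ}

lemma noDigitOne_iff : NoDigitOne d ↔ d 0 ≠ 1 ∧ NoDigitOne fun i => d (i + 1) :=
  ⟨fun h => ⟨h 0, fun i => h (i + 1)⟩, fun ⟨h0, h⟩ i => by cases i; exacts [h0, h _]⟩

lemma uniqueDigitOne_iff_of_ne_one (h0 : d 0 ≠ 1) :
    UniqueDigitOne d ↔ UniqueDigitOne fun i => d (i + 1) := by
  constructor
  · rintro ⟨_ | i, hi, huniq⟩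
    · exact absurd hi h0
    · exact ⟨i, hi, fun j hj => Nat.succ_injective (huniq (j + 1) hj)⟩
  · rintro ⟨i, hi, huniq⟩
    refine ⟨i + 1, hi, fun j hj => ?_⟩
    cases j with
    | zero => exact absurd hj h0
    | succ j => rw [huniq j hj]

lemma uniqueDigitOne_iff_of_eq_one (h0 : d 0 = 1) :
    UniqueDigitOne d ↔ NoDigitOne fun i => d (i + 1) := by
  constructor
  · rintro ⟨i, -, huniq⟩ j hj
    exact Nat.succ_ne_zero j ((huniq (j + 1) hj).trans (huniq 0 h0).symm)
  · intro h
    refine ⟨0, h0, fun j hj => ?_⟩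
    cases j with
    | zero => rfl
    | succ j => exact absurd hj (h j)

lemma onesAdjacentPair_iff_of_ne_one (h0 : d 0 ≠ 1) :
    OnesAdjacentPair d ↔ OnesAdjacentPair fun i => d (i + 1) := by
  constructor
  · rintro ⟨_ | i, hi, hi', hpair⟩
    · exact absurd hi h0
    · exact ⟨i, hi, hi', fun j hj => by have := hpair (j + 1) hj; omega⟩
  · rintro ⟨i, hi, hi', hpair⟩
    refine ⟨i + 1, hi, hi', fun j hj => ?_⟩
    cases j with
    | zero => exact absurd hj h0
    | succ j => have := hpair j hj; omega

lemma onesAdjacentPair_iff_of_eq_one (h0 : d 0 = 1) :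
    OnesAdjacentPair d ↔ d 1 = 1 ∧ NoDigitOne fun i => d (i + 2) := by
  constructor
  · rintro ⟨i, hi, hi', hpair⟩
    obtain rfl : i = 0 := by have := hpair 0 h0; omega
    exact ⟨hi', fun j hj => by have := hpair (j + 2) hj; omega⟩
  · rintro ⟨h1, h⟩
    refine ⟨0, h0, h1, fun j hj => ?_⟩
    match j, hj with
    | 0, _ => exact Or.inl rfl
    | 1, _ => exact Or.inr rfl
    | j + 2, hj => exact absurd hj (h j)

end DigitPatterns

section Residue

open scoped Classical

noncomputable def aperyResidue (d : ℕ → ℕ) : ℕ :=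
  if NoDigitOne d then 1 else if UniqueDigitOne d then 3 else if OnesAdjacentPair d then 6 else 0

lemma aperyResidue_of_ne_one {d : ℕ → ℕ} (h0 : d 0 ≠ 1) :
    aperyResidue d = aperyResidue fun i => d (i + 1) := by
  unfold aperyResidue
  rw [uniqueDigitOne_iff_of_ne_one h0, onesAdjacentPair_iff_of_ne_one h0, noDigitOne_iff,
    and_iff_right h0]

lemma aperyResidue_of_eq_one {d : ℕ → ℕ} (h0 : d 0 = 1) :
    aperyResidue d =
      3 * ((if d 1 = 1 then 2 else 1) * if NoDigitOne (fun i => d (i + 2)) then 1 else 0) := by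
  have hno : ¬ NoDigitOne d := fun h => h 0 h0
  unfold aperyResidue
  rw [if_neg hno, uniqueDigitOne_iff_of_eq_one h0, onesAdjacentPair_iff_of_eq_one h0,
    noDigitOne_iff]
  by_cases h1 : d 1 = 1 <;> by_cases h2 : NoDigitOne fun i => d (i + 2) <;> simp_all

lemma aperyResidue_modEq_three (d : ℕ → ℕ) :
    aperyResidue d ≡ if NoDigitOne d then 1 else 0 [MOD 3] := by
  unfold aperyResidue
  split_ifs <;> rfl

theorem apery_modEq_aperyResidue {r s : ℕ} (hr2 : 2 ≤ r) (hr : r % 3 = 1) (hs : s % 6 = 1)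
    (hsr : 2 ≤ s ∨ Even r) (n : ℕ) : apery r s n ≡ aperyResidue (ternaryDigit n) [MOD 9] := by
  induction n using Nat.strong_induction_on with
  | _ n ih =>
  obtain rfl | hn := Nat.eq_zero_or_pos n
  · have hno : NoDigitOne (ternaryDigit 0) := fun i => by simp [zero_ternaryDigit]
    simp [apery, aperyResidue, hno, Nat.ModEq]
  by_cases h1 : n % 3 = 1
  · have hdig : (fun i => ternaryDigit n (i + 2)) = ternaryDigit (n / 3 / 3) :=
      funext fun i => by rw [ternaryDigit_succ, ternaryDigit_succ]
    rw [aperyResidue_of_eq_one (by rwa [ternaryDigit_zero]), ternaryDigit_succ, ternaryDigit_zero,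
      hdig]
    refine (apery_modEq_of_mod_three_eq_one hr2 hr hs h1).trans
      (Nat.ModEq.mul_left' (n := 3) 3 (.mul_left _ ?_))
    exact ((ih _ (by omega)).of_dvd (by norm_num)).trans (aperyResidue_modEq_three _)
  · rw [aperyResidue_of_ne_one (by rwa [ternaryDigit_zero]), funext (ternaryDigit_succ n)]
    exact (apery_modEq_apery_div_three hr2 (by omega) hsr h1).trans (ih _ (by omega))

theorem modEq_nine_iff_of_modEq_aperyResidue {d : ℕ → ℕ} {x : ℕ}
    (hx : x ≡ aperyResidue d [MOD 9]) :
    (x ≡ 1 [MOD 9] ↔ NoDigitOne d) ∧ (x ≡ 3 [MOD 9] ↔ UniqueDigitOne d) ∧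
    (x ≡ 6 [MOD 9] ↔ OnesAdjacentPair d) ∧
    (¬NoDigitOne d ∧ ¬UniqueDigitOne d ∧ ¬OnesAdjacentPair d → 9 ∣ x) ∧
    ¬x ≡ 2 [MOD 9] ∧ ¬x ≡ 4 [MOD 9] ∧ ¬x ≡ 5 [MOD 9] ∧ ¬x ≡ 7 [MOD 9] ∧ ¬x ≡ 8 [MOD 9] := by
  have h₁₂ : NoDigitOne d → ¬UniqueDigitOne d := fun h ⟨i, hi, _⟩ => h i hi
  have h₁₃ : NoDigitOne d → ¬OnesAdjacentPair d := fun h ⟨i, hi, _⟩ => h i hi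
  have h₂₃ : UniqueDigitOne d → ¬OnesAdjacentPair d := fun ⟨i, _, huniq⟩ ⟨j, hj, hj', _⟩ => by
    have := huniq j hj
    have := huniq (j + 1) hj'
    omega
  unfold aperyResidue at hx
  simp only [Nat.ModEq, Nat.dvd_iff_mod_eq_zero] at hx ⊢
  split_ifs at hx <;> simp_all

end Residue

section Bridge

variable {d : ℕ → ℕ} {m : ℕ}

lemma noDigitOne_iff_forall_le (hd : ∀ i, d i ≤ 2) (hd0 : ∀ i, m < i → d i = 0) :
    NoDigitOne d ↔ ∀ i ≤ m, d i = 0 ∨ d i = 2 := by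
  refine ⟨fun h i _ => by have := hd i; have := h i; omega, fun h i => ?_⟩
  by_cases hi : i ≤ m
  · have := h i hi; omega
  · rw [hd0 i (by omega)]; omega

lemma uniqueDigitOne_iff_digitCount (hd : ∀ i, d i ≤ 2) (hd0 : ∀ i, m < i → d i = 0) :
    UniqueDigitOne d ↔ digitCount d m 1 = 1 ∧ occ d m 1 1 = 0 ∧
      ∀ i ≤ m, d i ≠ 1 → (d i = 0 ∨ d i = 2) := by
  have hcount : digitCount d m 1 = 1 ↔ UniqueDigitOne d := by
    rw [digitCount, card_eq_one_iff_existsUnique, UniqueDigitOne]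
    refine existsUnique_congr fun i => ⟨fun h => (mem_filter.1 h).2, fun h => ?_⟩
    refine mem_filter.2 ⟨mem_range.2 ?_, h⟩
    by_contra hi
    rw [hd0 i (by omega)] at h
    omega
  refine ⟨fun h => ⟨hcount.2 h, ?_, fun i _ _ => by have := hd i; omega⟩,
    fun h => hcount.1 h.1⟩
  obtain ⟨i, -, huniq⟩ := h
  rw [occ, card_eq_zero, filter_eq_empty_iff]
  rintro ν hν ⟨h1, h2⟩
  have := huniq ν h1
  have := huniq (ν - 1) h2
  rw [mem_Icc] at hν
  omega

lemma onesAdjacentPair_iff_uniqueOcc (hd : ∀ i, d i ≤ 2) (hd0 : ∀ i, m < i → d i = 0) :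
    OnesAdjacentPair d ↔ uniqueOcc d m 1 1 := by
  have hle : ∀ i, d i = 1 → i ≤ m := fun i h => by
    by_contra hi
    rw [hd0 i (by omega)] at h
    omega
  constructor
  · rintro ⟨i, hi, hi', hpair⟩
    have hocc : ∀ ν, 1 ≤ ν → d ν = 1 → d (ν - 1) = 1 → ν = i + 1 := fun ν hν h1 h2 => by
      have := hpair ν h1
      have := hpair (ν - 1) h2
      omega
    refine ⟨?_, fun ν hν hν' j _ hj hj' => ?_⟩
    · rw [occ, card_eq_one_iff_existsUnique]
      refine ⟨i + 1, ?_, fun ν hν => ?_⟩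
      · have := hle _ hi'
        simp only [mem_filter, mem_Icc]
        exact ⟨by omega, hi', hi⟩
      · simp only [mem_filter, mem_Icc] at hν
        exact hocc ν hν.1.1 hν.2.1 hν.2.2
    · rw [mem_Icc] at hν
      have := hocc ν hν.1 hν'.1 hν'.2
      have := hpair j
      have := hd j
      omega
  · rintro ⟨hocc, hclause⟩
    obtain ⟨ν, hν, -⟩ := card_eq_one_iff_existsUnique.1 hocc
    obtain ⟨hνI, h1, h2⟩ := mem_filter.1 hν
    rw [mem_Icc] at hνI
    have := hle ν h1
    refine ⟨ν - 1, h2, by rwa [Nat.sub_add_cancel hνI.1], fun j hj => ?_⟩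
    by_contra hne
    have := hclause ν (mem_Icc.2 hνI) ⟨h1, h2⟩ j (hle j hj) (by omega) (by omega)
    omega

end Bridge

theorem apery_mod_nine_r4_s1_general (r s : ℕ)
    (hrs : (r % 6 = 1 ∧ s % 6 = 1 ∧ 7 ≤ r ∧ 7 ≤ s) ∨ (r % 6 = 4 ∧ s % 6 = 1))
    (n m : ℕ) (d : ℕ → ℕ) (hd2 : ∀ i, d i ≤ 2) (hd0 : ∀ i, m < i → d i = 0)
    (hn : n = ∑ i ∈ Finset.range (m + 1), d i * 3 ^ i) :
    (apery r s n ≡ 1 [MOD 9] ↔ (∀ i ≤ m, d i = 0 ∨ d i = 2)) ∧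
    (apery r s n ≡ 3 [MOD 9] ↔ (digitCount d m 1 = 1 ∧ occ d m 1 1 = 0 ∧ ∀ i ≤ m, d i ≠ 1 → (d i = 0 ∨ d i = 2))) ∧
    (apery r s n ≡ 6 [MOD 9] ↔ uniqueOcc d m 1 1) ∧
    (¬ (∀ i ≤ m, d i = 0 ∨ d i = 2) ∧ ¬ (digitCount d m 1 = 1 ∧ occ d m 1 1 = 0 ∧ ∀ i ≤ m, d i ≠ 1 → (d i = 0 ∨ d i = 2)) ∧ ¬ uniqueOcc d m 1 1 → 9 ∣ apery r s n) ∧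
    ¬ (apery r s n ≡ 2 [MOD 9]) ∧
    ¬ (apery r s n ≡ 4 [MOD 9]) ∧
    ¬ (apery r s n ≡ 5 [MOD 9]) ∧
    ¬ (apery r s n ≡ 7 [MOD 9]) ∧
    ¬ (apery r s n ≡ 8 [MOD 9]) := by
  have hsr : 2 ≤ s ∨ Even r := by
    rcases hrs with h | h
    · exact Or.inl (by omega)
    · exact Or.inr (Nat.even_iff.2 (by omega))
  have hdigits : ternaryDigit n = d :=
    hn ▸ ternaryDigit_sum (fun i => Nat.lt_succ_of_le (hd2 i)) fun i hi => hd0 i (by omega)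
  have hres := apery_modEq_aperyResidue (r := r) (s := s) (by omega) (by omega) (by omega) hsr n
  rw [hdigits] at hres
  rw [← noDigitOne_iff_forall_le hd2 hd0, ← uniqueDigitOne_iff_digitCount hd2 hd0,
    ← onesAdjacentPair_iff_uniqueOcc hd2 hd0]
  exact modEq_nine_iff_of_modEq_aperyResidue hres

/-- Apéry numbers mod 9 for `r ≡ 1 (mod 6)`, `s ≡ 1 (mod 6)`, `r, s ≥ 7`, or
`r ≡ 4 (mod 6)`, `s ≡ 1 (mod 6)`. -/
theorem apery_mod_nine_r4_s1 (r s : ℕ) (hr : 0 < r) (hs : 0 < s)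
    (hrs : (r % 6 = 1 ∧ s % 6 = 1 ∧ 7 ≤ r ∧ 7 ≤ s) ∨ (r % 6 = 4 ∧ s % 6 = 1))
    (n m : ℕ) (d : ℕ → ℕ) (hd2 : ∀ i, d i ≤ 2) (hd0 : ∀ i, m < i → d i = 0)
    (hn : n = ∑ i ∈ Finset.range (m + 1), d i * 3 ^ i) :
    (apery r s n ≡ 1 [MOD 9] ↔ (∀ i ≤ m, d i = 0 ∨ d i = 2)) ∧
    (apery r s n ≡ 3 [MOD 9] ↔ (digitCount d m 1 = 1 ∧ occ d m 1 1 = 0 ∧ ∀ i ≤ m, d i ≠ 1 → (d i = 0 ∨ d i = 2))) ∧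
    (apery r s n ≡ 6 [MOD 9] ↔ uniqueOcc d m 1 1) ∧
    (¬ (∀ i ≤ m, d i = 0 ∨ d i = 2) ∧ ¬ (digitCount d m 1 = 1 ∧ occ d m 1 1 = 0 ∧ ∀ i ≤ m, d i ≠ 1 → (d i = 0 ∨ d i = 2)) ∧ ¬ uniqueOcc d m 1 1 → 9 ∣ apery r s n) ∧
    ¬ (apery r s n ≡ 2 [MOD 9]) ∧
    ¬ (apery r s n ≡ 4 [MOD 9]) ∧
    ¬ (apery r s n ≡ 5 [MOD 9]) ∧
    ¬ (apery r s n ≡ 7 [MOD 9]) ∧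
    ¬ (apery r s n ≡ 8 [MOD 9]) :=
  apery_mod_nine_r4_s1_general r s hrs n m d hd2 hd0 hn
end
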